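/- Fix t ∈ (0,1) and R, r ∈ (0,∞) with R > r > tR. Let A(r,R) = {ζ ∈ ℂ : r ≤ |ζ| ≤ R} be the closed annulus and Y = {(w, z, u) ∈ A(r,R) × A(r,R) × (ℂ ∖ [0,∞)) : |w| < |z|}. Then: (i) the function (w,z,u) ↦ S(w,z;u,t) is well defined and jointly continuous on Y; (ii) for fixed u ∈ ℂ ∖ [0,∞) and w ∈ A(r,R), the function z ↦ S(w,z;u,t) is holomorphic (complex differentiable) on {ζ ∈ A(r,R) : |ζ| > |w|}; (iii) for fixed u ∈ ℂ ∖ [0,∞) and z ∈ A(r,R), the function w ↦ S(w,z;u,t) is holomorphic on {ζ ∈ A(r,R) : |ζ| < |z|}; and (iv) for fixed w, z ∈ A(r,R) with |w| < |z|, the function u ↦ S(w,z;u,t) is holomorphic on ℂ ∖ [0,∞). -/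

import Mathlib

noncomputable def STerm (t : ℝ) (w z u : ℂ) (m : ℤ) : ℂ :=
  (Real.pi : ℂ) *
      (-u) ^ ((Complex.log w - Complex.log z) / (Real.log t : ℂ) -
        2 * (m : ℂ) * (Real.pi : ℂ) * Complex.I / (Real.log t : ℂ)) /
    Complex.sin (-(Real.pi : ℂ) * ((Complex.log w - Complex.log z) / (Real.log t : ℂ) -
        2 * (m : ℂ) * (Real.pi : ℂ) * Complex.I / (Real.log t : ℂ)))

noncomputable def SFun (t : ℝ) (w z u : ℂ) : ℂ := ∑' m : ℤ, STerm t w z u m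

/-
Write `L = log t`, `A = (Log w - Log z) / L` and `q = 2πi / L`, so that the `m`-th summand is
`π (-u)^(A - m q) / sin (-π (A - m q))`. Since
`|(-u)^(A - m q)| = |(-u)^A| exp (arg (-u) · 2πm / L)` and
`|sin (π s)| ≥ |sin (π Re s)| cosh (π Im s)`, the summands decay like
`exp (-(π - |arg (-u)|) · 2π|m| / |L|)`, locally uniformly on the open set of `(A, u)` with
`sin (π Re A) ≠ 0` and `-u` in the slit plane. The Weierstrass M-test then makes the sum
continuous in `(A, u)` and holomorphic in each variable. The sum is invariant under `A ↦ A + q`,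
so near any point the principal logarithms may be replaced by holomorphic branches, and `S` is
locally a composition of the sum with holomorphic functions of `w` and `z`. On the annulus,
`Re A = log (|w| / |z|) / log t` lies in `(0, 1)` because `t R < r`.
-/

open Complex Filter Topology
open scoped Real ComplexOrder

namespace Complex

lemma abs_sin_re_mul_cosh_im_le_norm_sin (z : ℂ) :
    |Real.sin z.re| * Real.cosh z.im ≤ ‖sin z‖ := by
  have hsq : ‖sin z‖ ^ 2 = Real.sin z.re ^ 2 + Real.sinh z.im ^ 2 := by
    rw [Complex.sq_norm, sin_eq, ← ofReal_sin, ← ofReal_cos, ← ofReal_sinh, ← ofReal_cosh,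
      normSq_apply]
    simp only [add_re, add_im, mul_re, mul_im, ofReal_re, ofReal_im, I_re, I_im]
    nlinarith [Real.sin_sq_add_cos_sq z.re, Real.cosh_sq z.im]
  refine abs_le_of_sq_le_sq' ?_ (norm_nonneg _) |>.2
  rw [hsq, mul_pow, sq_abs, Real.cosh_sq]
  nlinarith [Real.sin_sq_le_one z.re, sq_nonneg (Real.sinh z.im)]

lemma norm_cpow_sub_ofReal_mul_I {x : ℂ} (hx : x ≠ 0) (A : ℂ) (y : ℝ) :
    ‖x ^ (A - y * I)‖ = ‖x ^ A‖ * Real.exp (arg x * y) := by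
  rw [norm_cpow_of_ne_zero hx, norm_cpow_of_ne_zero hx]
  simp only [sub_re, sub_im, mul_re, mul_im, ofReal_re, ofReal_im, I_re, I_im, mul_zero,
    mul_one, sub_zero, add_zero]
  rw [mul_sub, Real.exp_sub]
  field_simp

lemma abs_arg_lt_pi_of_mem_slitPlane {x : ℂ} (hx : x ∈ slitPlane) : |arg x| < π :=
  abs_lt.mpr ⟨neg_pi_lt_arg x, (arg_le_pi x).lt_of_ne (mem_slitPlane_iff_arg.mp hx).1⟩

lemma neg_mem_slitPlane_of_notMem_ofReal_Ici {u : ℂ} (hu : u ∉ ofReal '' Set.Ici 0) :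
    -u ∈ slitPlane := by
  refine mem_slitPlane_iff_not_le_zero.mpr fun h => hu ⟨u.re, ?_, ?_⟩
  · simpa using re_le_re (neg_nonpos.mp h)
  · exact (eq_re_of_ofReal_le (r := 0) (by simpa using neg_nonpos.mp h)).symm

end Complex

lemma log_sub_log_div_log_mem_Ioo {t a b : ℝ} (ht : t ∈ Set.Ioo 0 1) (ha : 0 < a) (hab : a < b)
    (htb : t * b < a) : (Real.log a - Real.log b) / Real.log t ∈ Set.Ioo 0 1 := by
  have hb : 0 < b := ha.trans hab
  rw [← Real.log_div ha.ne' hb.ne']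
  have hL : Real.log t < 0 := Real.log_neg ht.1 ht.2
  have hlt : Real.log t < Real.log (a / b) :=
    Real.log_lt_log ht.1 ((lt_div_iff₀ hb).mpr htb)
  have hneg : Real.log (a / b) < 0 := Real.log_neg (div_pos ha hb) ((div_lt_one hb).mpr hab)
  exact ⟨div_pos_of_neg_of_neg hneg hL, (div_lt_one_of_neg hL).mpr hlt⟩

lemma summable_mul_pow_natAbs (C : ℝ) {ρ : ℝ} (h₀ : 0 ≤ ρ) (h₁ : ρ < 1) :
    Summable fun m : ℤ => C * ρ ^ m.natAbs :=
  (Summable.of_nat_of_neg (by simpa using summable_geometric_of_lt_one h₀ h₁)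
    (by simpa using summable_geometric_of_lt_one h₀ h₁)).mul_left C

theorem continuousAt_tsum_of_eventually_norm_le {ι X F : Type*} [TopologicalSpace X]
    [NormedAddCommGroup F] [CompleteSpace F] {f : ι → X → F} {b : ι → ℝ} {x₀ : X}
    (hb : Summable b) (hf : ∀ᶠ x in 𝓝 x₀, ∀ i, ContinuousAt (f i) x ∧ ‖f i x‖ ≤ b i) :
    ContinuousAt (fun x => ∑' i, f i x) x₀ :=
  (continuousOn_tsum (fun i _ hx => (hx i).1.continuousWithinAt) hb
    (fun i _ hx => (hx i).2)).continuousAt hf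

theorem differentiableAt_tsum_of_eventually_norm_le {ι F : Type*} [NormedAddCommGroup F]
    [NormedSpace ℂ F] [CompleteSpace F] {f : ι → ℂ → F} {b : ι → ℝ} {z₀ : ℂ} (hb : Summable b)
    (hf : ∀ᶠ z in 𝓝 z₀, ∀ i, DifferentiableAt ℂ (f i) z ∧ ‖f i z‖ ≤ b i) :
    DifferentiableAt ℂ (fun z => ∑' i, f i z) z₀ := by
  obtain ⟨U, hU, hUo, hz₀⟩ := eventually_nhds_iff.mp hf
  exact (differentiableOn_tsum_of_summable_norm hb
    (fun i z hz => (hU z hz i).1.differentiableWithinAt) hUo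
    (fun i z hz => (hU z hz i).2)).differentiableAt (hUo.mem_nhds hz₀)

namespace SFun

noncomputable def term (L : ℝ) (A u : ℂ) (m : ℤ) : ℂ :=
  π * (-u) ^ (A - m * (2 * π * I / L)) / sin (-π * (A - m * (2 * π * I / L)))

noncomputable def series (L : ℝ) (A u : ℂ) : ℂ := ∑' m : ℤ, term L A u m

def domain : Set (ℂ × ℂ) := {p | Real.sin (π * p.1.re) ≠ 0 ∧ -p.2 ∈ slitPlane}

lemma STerm_eq_term (t : ℝ) (w z u : ℂ) (m : ℤ) :
    STerm t w z u m = term (Real.log t) ((log w - log z) / Real.log t) u m := by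
  have h : 2 * (m : ℂ) * π * I / Real.log t = m * (2 * π * I / Real.log t) := by ring
  simp only [STerm, term, h]

lemma SFun_eq_series (t : ℝ) (w z u : ℂ) :
    SFun t w z u = series (Real.log t) ((log w - log z) / Real.log t) u :=
  tsum_congr (STerm_eq_term t w z u)

lemma term_add_int_mul (L : ℝ) (A u : ℂ) (k m : ℤ) :
    term L (A + k * (2 * π * I / L)) u m = term L A u (m - k) := by
  have h : A + k * (2 * π * I / L) - m * (2 * π * I / L) =
      A - ((m - k : ℤ) : ℂ) * (2 * π * I / L) := by
    push_cast; ring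
  rw [term, term, h]

lemma series_add_int_mul (L : ℝ) (A u : ℂ) (k : ℤ) :
    series L (A + k * (2 * π * I / L)) u = series L A u := by
  simp only [series, term_add_int_mul]
  exact (Equiv.subRight k).tsum_eq (term L A u)

lemma SFun_eq_series_of_exp_eq (t : ℝ) {w z ℓ₁ ℓ₂ : ℂ} (hℓ₁ : exp ℓ₁ = w) (hℓ₂ : exp ℓ₂ = z)
    (u : ℂ) : SFun t w z u = series (Real.log t) ((ℓ₁ - ℓ₂) / Real.log t) u := by
  obtain ⟨n₁, hn₁⟩ := exp_eq_exp_iff_exists_int.mp (hℓ₁.trans (exp_log (hℓ₁ ▸ exp_ne_zero ℓ₁)).symm)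
  obtain ⟨n₂, hn₂⟩ := exp_eq_exp_iff_exists_int.mp (hℓ₂.trans (exp_log (hℓ₂ ▸ exp_ne_zero ℓ₂)).symm)
  have h : (ℓ₁ - ℓ₂) / Real.log t =
      (log w - log z) / Real.log t + ((n₁ - n₂ : ℤ) : ℂ) * (2 * π * I / Real.log t) := by
    rw [hn₁, hn₂]; push_cast; ring
  rw [h, series_add_int_mul, SFun_eq_series]

lemma intCast_mul_two_pi_I_div (L : ℝ) (m : ℤ) :
    (m : ℂ) * (2 * π * I / L) = ((2 * π * m / L : ℝ) : ℂ) * I := by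
  push_cast; ring

lemma norm_term_le {L : ℝ} {A u : ℂ} (hu : u ≠ 0) {σ K B θ : ℝ} (hσ : 0 < σ)
    (hσA : σ ≤ |Real.sin (π * A.re)|) (hK : |A.im| ≤ K) (hB : ‖(-u) ^ A‖ ≤ B)
    (hθ : |arg (-u)| ≤ θ) (m : ℤ) :
    ‖term L A u m‖ ≤
      2 * π * B * Real.exp (π * K) / σ * Real.exp (-(π - θ) * (2 * π / |L|)) ^ m.natAbs := by
  have hB0 : 0 ≤ B := (norm_nonneg _).trans hB
  set y : ℝ := 2 * π * m / L
  have hy : |y| = 2 * π / |L| * m.natAbs := by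
    simp only [y, abs_div, abs_mul, abs_of_pos Real.pi_pos, Nat.abs_ofNat, Nat.cast_natAbs,
      Int.cast_abs]
    ring
  have hnum : ‖(-u) ^ (A - m * (2 * π * I / L))‖ ≤ B * Real.exp (θ * |y|) := by
    rw [intCast_mul_two_pi_I_div, norm_cpow_sub_ofReal_mul_I (neg_ne_zero.mpr hu)]
    refine mul_le_mul hB (Real.exp_le_exp.mpr ?_) (Real.exp_pos _).le hB0
    calc arg (-u) * y ≤ |arg (-u)| * |y| := (le_abs_self _).trans (abs_mul _ _).le
      _ ≤ θ * |y| := by gcongr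
  have hden : σ * Real.exp (π * (|y| - K)) / 2 ≤ ‖sin (-π * (A - m * (2 * π * I / L)))‖ := by
    refine le_trans ?_ (abs_sin_re_mul_cosh_im_le_norm_sin _)
    have hre : (-(π : ℂ) * (A - y * I)).re = -(π * A.re) := by simp
    have him : (-(π : ℂ) * (A - y * I)).im = -(π * (A.im - y)) := by simp
    have hyK : |y| - K ≤ |A.im - y| := by
      linarith [abs_sub_abs_le_abs_sub y A.im, abs_sub_comm y A.im]
    rw [intCast_mul_two_pi_I_div, hre, him, Real.sin_neg, abs_neg, Real.cosh_neg]
    calc σ * Real.exp (π * (|y| - K)) / 2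
        ≤ |Real.sin (π * A.re)| * (Real.exp |π * (A.im - y)| / 2) := by
          rw [abs_mul, abs_of_pos Real.pi_pos, mul_div_assoc]
          gcongr
      _ ≤ |Real.sin (π * A.re)| * Real.cosh (π * (A.im - y)) := by
          rw [Real.cosh_eq]
          gcongr
          linarith [Real.exp_abs_le (π * (A.im - y))]
  rw [term, norm_div, norm_mul, norm_real, Real.norm_of_nonneg Real.pi_pos.le]
  calc π * ‖(-u) ^ (A - m * (2 * π * I / L))‖ / ‖sin (-π * (A - m * (2 * π * I / L)))‖
      ≤ π * (B * Real.exp (θ * |y|)) / (σ * Real.exp (π * (|y| - K)) / 2) := by gcongr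
    _ = _ := by
      rw [← Real.exp_nat_mul]
      field_simp
      rw [mul_assoc, mul_assoc, ← Real.exp_add, ← Real.exp_add, hy]
      ring_nf

lemma isOpen_domain : IsOpen domain :=
  (isOpen_ne_fun (by fun_prop) continuous_const).inter
    (isOpen_slitPlane.preimage (by fun_prop))

lemma exists_summable_eventually_norm_term_le {L : ℝ} (hL : L ≠ 0) {p₀ : ℂ × ℂ}
    (hp₀ : p₀ ∈ domain) : ∃ b : ℤ → ℝ, Summable b ∧
      ∀ᶠ p in 𝓝 p₀, p ∈ domain ∧ ∀ m, ‖term L p.1 p.2 m‖ ≤ b m := by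
  obtain ⟨hA₀, hu₀⟩ := hp₀
  set σ := |Real.sin (π * p₀.1.re)| / 2
  set K := |p₀.1.im| + 1
  set B := ‖(-p₀.2) ^ p₀.1‖ + 1
  set θ := (|arg (-p₀.2)| + π) / 2
  have hθ : θ < π := by
    show (|arg (-p₀.2)| + π) / 2 < π
    linarith [abs_arg_lt_pi_of_mem_slitPlane hu₀]
  have hρ : Real.exp (-(π - θ) * (2 * π / |L|)) < 1 := by
    rw [Real.exp_lt_one_iff]
    have : 0 < 2 * π / |L| := by positivity
    nlinarith
  refine ⟨_, summable_mul_pow_natAbs (2 * π * B * Real.exp (π * K) / σ) (Real.exp_pos _).le hρ, ?_⟩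
  have hsin : ∀ᶠ p in 𝓝 p₀, σ < |Real.sin (π * p.1.re)| :=
    continuousAt_const.eventually_lt (by fun_prop) (half_lt_self (abs_pos.mpr hA₀))
  have him : ∀ᶠ p in 𝓝 p₀, |p.1.im| < K :=
    (by fun_prop : ContinuousAt _ p₀).eventually_lt continuousAt_const (lt_add_one _)
  have hpow : ∀ᶠ p in 𝓝 p₀, ‖(-p.2) ^ p.1‖ < B :=
    ((continuousAt_snd.neg.cpow continuousAt_fst hu₀).norm).eventually_lt continuousAt_const
      (lt_add_one _)
  have harg : ∀ᶠ p in 𝓝 p₀, |arg (-p.2)| < θ :=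
    ((continuousAt_arg hu₀).comp (f := fun p : ℂ × ℂ => -p.2) (by fun_prop)).abs.eventually_lt
      continuousAt_const (show |arg (-p₀.2)| < (|arg (-p₀.2)| + π) / 2 by
        linarith [abs_arg_lt_pi_of_mem_slitPlane hu₀])
  filter_upwards [isOpen_domain.mem_nhds ⟨hA₀, hu₀⟩, hsin, him, hpow, harg]
    with p hp hpsin hpim hppow hparg
  exact ⟨hp, norm_term_le (neg_ne_zero.mp (slitPlane_ne_zero hp.2))
    (half_pos (abs_pos.mpr hA₀)) hpsin.le hpim.le hppow.le hparg.le⟩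

section

variable {L : ℝ}

lemma sin_ne_zero_of_sin_re_ne_zero {A : ℂ} (hA : Real.sin (π * A.re) ≠ 0) (m : ℤ) :
    sin (-π * (A - m * (2 * π * I / L))) ≠ 0 := by
  have hre : (-(π : ℂ) * (A - (2 * π * m / L : ℝ) * I)).re = -(π * A.re) := by simp
  rw [intCast_mul_two_pi_I_div]
  refine norm_pos_iff.mp (lt_of_lt_of_le ?_ (abs_sin_re_mul_cosh_im_le_norm_sin _))
  rw [hre, Real.sin_neg, abs_neg]
  exact mul_pos (abs_pos.mpr hA) (Real.cosh_pos _)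

lemma continuousAt_term {p : ℂ × ℂ} (hp : p ∈ domain) (m : ℤ) :
    ContinuousAt (fun p : ℂ × ℂ => term L p.1 p.2 m) p :=
  (continuousAt_const.mul (continuousAt_snd.neg.cpow (continuousAt_fst.sub continuousAt_const)
    hp.2)).div (by fun_prop) (sin_ne_zero_of_sin_re_ne_zero hp.1 m)

lemma differentiableAt_term_left {A u : ℂ} (hp : (A, u) ∈ domain) (m : ℤ) :
    DifferentiableAt ℂ (fun A => term L A u m) A :=
  ((differentiableAt_const _).mul ((differentiableAt_const _).cpow
    (differentiableAt_id.sub_const _) hp.2)).div (by fun_prop)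
    (sin_ne_zero_of_sin_re_ne_zero hp.1 m)

lemma differentiableAt_term_right {A u : ℂ} (hp : (A, u) ∈ domain) (m : ℤ) :
    DifferentiableAt ℂ (fun u => term L A u m) u :=
  ((differentiableAt_const _).mul (differentiableAt_id.neg.cpow (differentiableAt_const _)
    hp.2)).div (differentiableAt_const _) (sin_ne_zero_of_sin_re_ne_zero hp.1 m)

lemma summable_term (hL : L ≠ 0) {A u : ℂ} (hp : (A, u) ∈ domain) : Summable (term L A u) :=
  have ⟨_, hb, h⟩ := exists_summable_eventually_norm_term_le hL hp
  hb.of_norm_bounded h.self_of_nhds.2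

lemma continuousAt_series (hL : L ≠ 0) {p : ℂ × ℂ} (hp : p ∈ domain) :
    ContinuousAt (fun p : ℂ × ℂ => series L p.1 p.2) p :=
  have ⟨_, hb, h⟩ := exists_summable_eventually_norm_term_le hL hp
  continuousAt_tsum_of_eventually_norm_le hb
    (h.mono fun _ hq m => ⟨continuousAt_term hq.1 m, hq.2 m⟩)

lemma differentiableAt_series_left (hL : L ≠ 0) {A u : ℂ} (hp : (A, u) ∈ domain) :
    DifferentiableAt ℂ (fun A => series L A u) A := by
  obtain ⟨_, hb, h⟩ := exists_summable_eventually_norm_term_le hL hp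
  refine differentiableAt_tsum_of_eventually_norm_le hb ?_
  filter_upwards [((continuous_id.prodMk continuous_const).tendsto A).eventually h]
    with A' hA' m using ⟨differentiableAt_term_left hA'.1 m, hA'.2 m⟩

lemma differentiableAt_series_right (hL : L ≠ 0) {A u : ℂ} (hp : (A, u) ∈ domain) :
    DifferentiableAt ℂ (fun u => series L A u) u := by
  obtain ⟨_, hb, h⟩ := exists_summable_eventually_norm_term_le hL hp
  refine differentiableAt_tsum_of_eventually_norm_le hb ?_
  filter_upwards [((continuous_const.prodMk continuous_id).tendsto u).eventually h]
    with u' hu' m using ⟨differentiableAt_term_right hu'.1 m, hu'.2 m⟩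

end

noncomputable def localLog (w₀ w : ℂ) : ℂ := log (w / w₀) + log w₀

lemma exp_localLog {w₀ w : ℂ} (hw₀ : w₀ ≠ 0) (hw : w ≠ 0) : exp (localLog w₀ w) = w := by
  rw [localLog, exp_add, exp_log (div_ne_zero hw hw₀), exp_log hw₀, div_mul_cancel₀ _ hw₀]

lemma localLog_self {w₀ : ℂ} (hw₀ : w₀ ≠ 0) : localLog w₀ w₀ = log w₀ := by
  simp [localLog, hw₀]

lemma differentiableAt_localLog {w₀ : ℂ} (hw₀ : w₀ ≠ 0) :
    DifferentiableAt ℂ (localLog w₀) w₀ :=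
  ((differentiableAt_log (by rw [div_self hw₀]; exact one_mem_slitPlane)).comp w₀
    (differentiableAt_id.div_const w₀)).add_const _

section

variable {t : ℝ} {w z u : ℂ}

lemma continuousAt_SFun (ht : Real.log t ≠ 0) (hw : w ≠ 0) (hz : z ≠ 0)
    (hp : ((log w - log z) / Real.log t, u) ∈ domain) :
    ContinuousAt (fun p : ℂ × ℂ × ℂ => SFun t p.1 p.2.1 p.2.2) (w, z, u) := by
  have hloc : (fun p : ℂ × ℂ × ℂ => series (Real.log t)
      ((localLog w p.1 - localLog z p.2.1) / Real.log t) p.2.2) =ᶠ[𝓝 (w, z, u)]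
      fun p => SFun t p.1 p.2.1 p.2.2 := by
    filter_upwards [continuousAt_fst.eventually (eventually_ne_nhds hw),
      continuousAt_snd.fst.eventually (eventually_ne_nhds hz)] with p hp₁ hp₂
    exact (SFun_eq_series_of_exp_eq t (exp_localLog hw hp₁) (exp_localLog hz hp₂) p.2.2).symm
  have h₁ : ContinuousAt (fun p : ℂ × ℂ × ℂ => localLog w p.1) (w, z, u) :=
    (differentiableAt_localLog hw).continuousAt.comp_of_eq continuousAt_fst rfl
  have h₂ : ContinuousAt (fun p : ℂ × ℂ × ℂ => localLog z p.2.1) (w, z, u) :=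
    (differentiableAt_localLog hz).continuousAt.comp_of_eq continuousAt_snd.fst rfl
  have hA : ((localLog w w - localLog z z) / Real.log t, u) =
      ((log w - log z) / Real.log t, u) := by
    rw [localLog_self hw, localLog_self hz]
  have hg := ((h₁.sub h₂).div_const (Real.log t : ℂ)).prodMk continuousAt_snd.snd
  exact ((continuousAt_series ht hp).comp_of_eq hg hA).congr hloc

lemma differentiableAt_SFun_left (ht : Real.log t ≠ 0) (hw : w ≠ 0) (hz : z ≠ 0)
    (hp : ((log w - log z) / Real.log t, u) ∈ domain) :
    DifferentiableAt ℂ (fun w' => SFun t w' z u) w := by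
  have hloc : (fun w' => series (Real.log t) ((localLog w w' - log z) / Real.log t) u)
      =ᶠ[𝓝 w] fun w' => SFun t w' z u := by
    filter_upwards [eventually_ne_nhds hw] with w' hw'
    exact (SFun_eq_series_of_exp_eq t (exp_localLog hw hw') (exp_log hz) u).symm
  refine DifferentiableAt.congr_of_eventuallyEq ?_ hloc.symm
  refine DifferentiableAt.comp (g := fun A => series (Real.log t) A u) w ?_
    (((differentiableAt_localLog hw).sub_const _).div_const _)
  simpa [localLog_self hw] using differentiableAt_series_left ht hp

lemma differentiableAt_SFun_right (ht : Real.log t ≠ 0) (hw : w ≠ 0) (hz : z ≠ 0)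
    (hp : ((log w - log z) / Real.log t, u) ∈ domain) :
    DifferentiableAt ℂ (fun z' => SFun t w z' u) z := by
  have hloc : (fun z' => series (Real.log t) ((log w - localLog z z') / Real.log t) u)
      =ᶠ[𝓝 z] fun z' => SFun t w z' u := by
    filter_upwards [eventually_ne_nhds hz] with z' hz'
    exact (SFun_eq_series_of_exp_eq t (exp_log hw) (exp_localLog hz hz') u).symm
  refine DifferentiableAt.congr_of_eventuallyEq ?_ hloc.symm
  refine DifferentiableAt.comp (g := fun A => series (Real.log t) A u) z ?_
    (((differentiableAt_localLog hz).const_sub _).div_const _)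
  simpa [localLog_self hz] using differentiableAt_series_left ht hp

lemma differentiableAt_SFun_param (ht : Real.log t ≠ 0)
    (hp : ((log w - log z) / Real.log t, u) ∈ domain) :
    DifferentiableAt ℂ (fun u => SFun t w z u) u := by
  simpa only [SFun_eq_series] using differentiableAt_series_right ht hp

lemma mem_domain_of_mem_annulus {r R : ℝ} (ht : t ∈ Set.Ioo 0 1) (hr : 0 < r)
    (htR : t * R < r) (hw : ‖w‖ ∈ Set.Icc r R) (hz : ‖z‖ ∈ Set.Icc r R) (hwz : ‖w‖ < ‖z‖)
    (hu : u ∉ ofReal '' Set.Ici 0) : ((log w - log z) / Real.log t, u) ∈ domain := by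
  have htz : t * ‖z‖ < ‖w‖ := by nlinarith [ht.1, hz.2, hw.1]
  obtain ⟨h₀, h₁⟩ := log_sub_log_div_log_mem_Ioo ht (hr.trans_le hw.1) hwz htz
  refine ⟨?_, neg_mem_slitPlane_of_notMem_ofReal_Ici hu⟩
  simp only [div_ofReal_re, sub_re, log_re]
  exact (Real.sin_pos_of_pos_of_lt_pi (by positivity) (by nlinarith [Real.pi_pos])).ne'

end

end SFun

open SFun

theorem stmt14_general (t : ℝ) (ht : t ∈ Set.Ioo (0:ℝ) 1) (r R : ℝ)
    (hr : 0 < r) (htR : t * R < r) :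
    (∀ w z u : ℂ, ‖w‖ ∈ Set.Icc r R → ‖z‖ ∈ Set.Icc r R →
        u ∈ (Complex.ofReal '' Set.Ici (0:ℝ))ᶜ → ‖w‖ < ‖z‖ →
        Summable (fun m : ℤ => STerm t w z u m)) ∧
    ContinuousOn (fun p : ℂ × ℂ × ℂ => SFun t p.1 p.2.1 p.2.2)
      {p : ℂ × ℂ × ℂ | ‖p.1‖ ∈ Set.Icc r R ∧ ‖p.2.1‖ ∈ Set.Icc r R ∧
        p.2.2 ∈ (Complex.ofReal '' Set.Ici (0:ℝ))ᶜ ∧ ‖p.1‖ < ‖p.2.1‖} ∧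
    (∀ u ∈ (Complex.ofReal '' Set.Ici (0:ℝ))ᶜ, ∀ w : ℂ, ‖w‖ ∈ Set.Icc r R →
        DifferentiableOn ℂ (fun z => SFun t w z u)
          {ζ : ℂ | ‖ζ‖ ∈ Set.Icc r R ∧ ‖w‖ < ‖ζ‖}) ∧
    (∀ u ∈ (Complex.ofReal '' Set.Ici (0:ℝ))ᶜ, ∀ z : ℂ, ‖z‖ ∈ Set.Icc r R →
        DifferentiableOn ℂ (fun w => SFun t w z u)
          {ζ : ℂ | ‖ζ‖ ∈ Set.Icc r R ∧ ‖ζ‖ < ‖z‖}) ∧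
    (∀ w z : ℂ, ‖w‖ ∈ Set.Icc r R → ‖z‖ ∈ Set.Icc r R →
        ‖w‖ < ‖z‖ →
        DifferentiableOn ℂ (fun u => SFun t w z u) (Complex.ofReal '' Set.Ici (0:ℝ))ᶜ) := by
  have hL : Real.log t ≠ 0 := (Real.log_neg ht.1 ht.2).ne
  have hne : ∀ ζ : ℂ, ‖ζ‖ ∈ Set.Icc r R → ζ ≠ 0 := fun ζ h => norm_pos_iff.mp (hr.trans_le h.1)
  have hdom : ∀ {w z u : ℂ}, ‖w‖ ∈ Set.Icc r R → ‖z‖ ∈ Set.Icc r R → ‖w‖ < ‖z‖ →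
      u ∉ ofReal '' Set.Ici 0 → ((log w - log z) / Real.log t, u) ∈ domain :=
    mem_domain_of_mem_annulus ht hr htR
  refine ⟨fun w z u hw hz hu hwz => ?_, fun ⟨w, z, u⟩ ⟨hw, hz, hu, hwz⟩ => ?_,
    fun u hu w hw z ⟨hz, hwz⟩ => ?_, fun u hu z hz w ⟨hw, hwz⟩ => ?_,
    fun w z hw hz hwz u hu => ?_⟩
  · simpa only [STerm_eq_term] using summable_term hL (hdom hw hz hwz hu)
  · exact (continuousAt_SFun hL (hne w hw) (hne z hz) (hdom hw hz hwz hu)).continuousWithinAt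
  · exact (differentiableAt_SFun_right hL (hne w hw) (hne z hz)
      (hdom hw hz hwz hu)).differentiableWithinAt
  · exact (differentiableAt_SFun_left hL (hne w hw) (hne z hz)
      (hdom hw hz hwz hu)).differentiableWithinAt
  · exact (differentiableAt_SFun_param hL (hdom hw hz hwz hu)).differentiableWithinAt

theorem stmt14 (t : ℝ) (ht : t ∈ Set.Ioo (0:ℝ) 1) (r R : ℝ)
    (hr : 0 < r) (hrR : r < R) (htR : t * R < r) :
    (∀ w z u : ℂ, ‖w‖ ∈ Set.Icc r R → ‖z‖ ∈ Set.Icc r R →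
        u ∈ (Complex.ofReal '' Set.Ici (0:ℝ))ᶜ → ‖w‖ < ‖z‖ →
        Summable (fun m : ℤ => STerm t w z u m)) ∧
    ContinuousOn (fun p : ℂ × ℂ × ℂ => SFun t p.1 p.2.1 p.2.2)
      {p : ℂ × ℂ × ℂ | ‖p.1‖ ∈ Set.Icc r R ∧ ‖p.2.1‖ ∈ Set.Icc r R ∧
        p.2.2 ∈ (Complex.ofReal '' Set.Ici (0:ℝ))ᶜ ∧ ‖p.1‖ < ‖p.2.1‖} ∧
    (∀ u ∈ (Complex.ofReal '' Set.Ici (0:ℝ))ᶜ, ∀ w : ℂ, ‖w‖ ∈ Set.Icc r R →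
        DifferentiableOn ℂ (fun z => SFun t w z u)
          {ζ : ℂ | ‖ζ‖ ∈ Set.Icc r R ∧ ‖w‖ < ‖ζ‖}) ∧
    (∀ u ∈ (Complex.ofReal '' Set.Ici (0:ℝ))ᶜ, ∀ z : ℂ, ‖z‖ ∈ Set.Icc r R →
        DifferentiableOn ℂ (fun w => SFun t w z u)
          {ζ : ℂ | ‖ζ‖ ∈ Set.Icc r R ∧ ‖ζ‖ < ‖z‖}) ∧
    (∀ w z : ℂ, ‖w‖ ∈ Set.Icc r R → ‖z‖ ∈ Set.Icc r R →
        ‖w‖ < ‖z‖ →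
        DifferentiableOn ℂ (fun u => SFun t w z u) (Complex.ofReal '' Set.Ici (0:ℝ))ᶜ) :=
  stmt14_general t ht r R hr htR
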